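/- Let k₁, k₂, l₁, l₂ be positive integer multiples of 2π with k₁ ≠ l₁ and k₂ ≠ l₂. For α ∈ ℝ put U_α = (x ↦ cos(k₁x), x ↦ cos(k₂x), α) and V = (x ↦ cos(l₁x), x ↦ cos(l₂x), 1), and define the normalized sectional curvature K(U_α,V) := S(U_α,V) / ( ⟨U_α,U_α⟩_𝔸·⟨V,V⟩_𝔸 − ⟨U_α,V⟩_𝔸² ). Then there exist c > 0 and α₀ ∈ ℝ such that K(U_α,V) ≥ c for all α ≥ α₀; that is, the normalized sectional curvature is bounded away from zero as α → ∞. -/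

import Mathlib

open Real intervalIntegral
open Filter Topology MeasureTheory

/-- A smooth 1-periodic function, modelling `C^∞(𝕊)`, `𝕊 = ℝ/ℤ`. -/
def SmoothPer (f : ℝ → ℝ) : Prop := ContDiff ℝ (⊤ : ℕ∞) f ∧ ∀ x, f (x + 1) = f x

/-- The inner product `⟨U,V⟩_𝔸` on `C^∞(𝕊) × C^∞(𝕊) × ℝ` for the 2CH system
with vorticity. -/
noncomputable def innerA (u₁ u₂ : ℝ → ℝ) (u₃ : ℝ) (v₁ v₂ : ℝ → ℝ) (v₃ : ℝ) : ℝ :=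
  (∫ x in (0:ℝ)..1, u₁ x * v₁ x) + (∫ x in (0:ℝ)..1, deriv u₁ x * deriv v₁ x)
    + (∫ x in (0:ℝ)..1, u₂ x * v₂ x)
    - (1/2) * (∫ x in (0:ℝ)..1, (u₁ x * v₃ + u₃ * v₁ x)) + (1/2) * u₃ * v₃

/-- The defining ODE for `P_{UV}`: `P − P'' = (u₁v₁ + ½u₁'v₁' + ½u₂v₂)'`. -/
def IsP (u₁ u₂ v₁ v₂ P : ℝ → ℝ) : Prop :=
  ∀ x, P x - deriv (deriv P) x
    = deriv (fun y => u₁ y * v₁ y + deriv u₁ y * deriv v₁ y / 2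
        + u₂ y * v₂ y / 2) x

/-- The defining ODE for `Q_{UV}`: `Q − Q'' = (u₃v₁ + u₁v₃)'`. -/
def IsQ (u₁ : ℝ → ℝ) (u₃ : ℝ) (v₁ : ℝ → ℝ) (v₃ : ℝ) (Q : ℝ → ℝ) : Prop :=
  ∀ x, Q x - deriv (deriv Q) x = deriv (fun y => u₃ * v₁ y + u₁ y * v₃) x

/-! ### Auxiliary material -/

section Aux

open MeasureTheory Filter

/-- Internal notion: `C^∞` (not necessarily analytic) and 1-periodic. -/
def Sm (f : ℝ → ℝ) : Prop :=
  ContDiff ℝ ((⊤:ℕ∞) : WithTop ℕ∞) f ∧ ∀ x, f (x + 1) = f x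

lemma SmoothPer.sm {f : ℝ → ℝ} (hf : SmoothPer f) : Sm f :=
  ⟨hf.1.of_le (by simp), hf.2⟩

namespace Sm

variable {f g : ℝ → ℝ}

lemma cont (hf : Sm f) : Continuous f := hf.1.continuous
lemma diff (hf : Sm f) : Differentiable ℝ f :=
  hf.1.differentiable (by simp)
lemma periodic (hf : Sm f) : Function.Periodic f 1 := hf.2

lemma derivSP (hf : Sm f) : Sm (deriv f) := by
  refine ⟨(contDiff_infty_iff_deriv.mp hf.1).2, fun x => ?_⟩
  have h : (fun y => f (y + 1)) = f := funext hf.2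
  calc deriv f (x + 1) = deriv (fun y => f (y + 1)) x := (deriv_comp_add_const f 1 x).symm
    _ = deriv f x := by rw [h]

lemma one_eq_zero (hf : Sm f) : f 1 = f 0 := by
  have := hf.2 0; simpa using this

lemma sub (hf : Sm f) (hg : Sm g) : Sm (fun x => f x - g x) :=
  ⟨hf.1.sub hg.1, fun x => by simp only; rw [hf.2, hg.2]⟩

/-- Integration by parts on one period. -/
lemma ibp (hf : Sm f) (hg : Sm g) :
    (∫ x in (0:ℝ)..1, deriv f x * g x) = - ∫ x in (0:ℝ)..1, f x * deriv g x := by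
  have h := intervalIntegral.integral_deriv_mul_eq_sub (a := (0:ℝ)) (b := 1)
    (u := f) (v := g) (u' := deriv f) (v' := deriv g)
    (fun x _ => (hf.diff x).hasDerivAt) (fun x _ => (hg.diff x).hasDerivAt)
    ((hf.derivSP.cont).intervalIntegrable _ _) ((hg.derivSP.cont).intervalIntegrable _ _)
  rw [hf.one_eq_zero, hg.one_eq_zero, sub_self] at h
  rw [intervalIntegral.integral_add (f := fun x => deriv f x * g x) (g := fun x => f x * deriv g x)
    ((hf.derivSP.cont.mul hg.cont).intervalIntegrable _ _)
    ((hf.cont.mul hg.derivSP.cont).intervalIntegrable _ _)] at h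
  linarith

/-- Uniqueness kernel: a smooth periodic solution of `h = h''` vanishes. -/
lemma eq_zero (hf : Sm f) (he : ∀ x, f x - deriv (deriv f) x = 0) :
    ∀ x, f x = 0 := by
  have hint0 : (∫ x in (0:ℝ)..1, f x * (f x - deriv (deriv f) x)) = 0 := by
    simp [he]
  have hsplit : (∫ x in (0:ℝ)..1, f x * (f x - deriv (deriv f) x))
      = (∫ x in (0:ℝ)..1, f x * f x) - ∫ x in (0:ℝ)..1, f x * deriv (deriv f) x := by
    rw [← intervalIntegral.integral_sub (f := fun x => f x * f x)
      (g := fun x => f x * deriv (deriv f) x) ((hf.cont.mul hf.cont).intervalIntegrable _ _)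
      ((hf.cont.mul hf.derivSP.derivSP.cont).intervalIntegrable _ _)]
    congr 1; funext x; ring
  have hibp : (∫ x in (0:ℝ)..1, deriv (deriv f) x * f x)
      = - ∫ x in (0:ℝ)..1, deriv f x * deriv f x := hf.derivSP.ibp hf
  have hcomm : (∫ x in (0:ℝ)..1, f x * deriv (deriv f) x)
      = ∫ x in (0:ℝ)..1, deriv (deriv f) x * f x := by
    congr 1; funext x; ring
  have hsum : (∫ x in (0:ℝ)..1, f x * f x)
      + (∫ x in (0:ℝ)..1, deriv f x * deriv f x) = 0 := by
    rw [hsplit, hcomm, hibp] at hint0; linarith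
  have h1 : (0:ℝ) ≤ ∫ x in (0:ℝ)..1, f x * f x :=
    intervalIntegral.integral_nonneg (by norm_num) (fun x _ => mul_self_nonneg _)
  have h2 : (0:ℝ) ≤ ∫ x in (0:ℝ)..1, deriv f x * deriv f x :=
    intervalIntegral.integral_nonneg (by norm_num) (fun x _ => mul_self_nonneg _)
  have hzero : (∫ x in (0:ℝ)..1, f x * f x) = 0 := by linarith
  have hIcc : ∀ x ∈ Set.Icc (0:ℝ) 1, f x = 0 := by
    intro x hx
    by_contra hne
    have hpos : (0:ℝ) < ∫ x in (0:ℝ)..1, f x * f x :=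
      intervalIntegral.integral_pos one_pos ((hf.cont.mul hf.cont).continuousOn)
        (fun y _ => mul_self_nonneg _) ⟨x, hx, mul_self_pos.mpr hne⟩
    rw [hzero] at hpos; exact lt_irrefl 0 hpos
  intro x
  have hsub := hf.periodic.sub_int_mul_eq (x := x) (n := ⌊x⌋)
  have hfr : f x = f (Int.fract x) := by
    rw [Int.fract, ← hsub]; norm_num
  rw [hfr]
  exact hIcc _ ⟨Int.fract_nonneg x, (Int.fract_lt_one x).le⟩

end Sm

lemma contC (c : ℝ) : Continuous fun x : ℝ => cos (c*x) :=
  Real.continuous_cos.comp (continuous_const.mul continuous_id)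
lemma contS (c : ℝ) : Continuous fun x : ℝ => sin (c*x) :=
  Real.continuous_sin.comp (continuous_const.mul continuous_id)

lemma hasDerivAt_cos_mul (a x : ℝ) :
    HasDerivAt (fun y => cos (a*y)) (-sin (a*x) * a) x := by
  simpa using (((hasDerivAt_id x).const_mul a).cos)

lemma hasDerivAt_sin_mul (a x : ℝ) :
    HasDerivAt (fun y => sin (a*y)) (cos (a*x) * a) x := by
  simpa using (((hasDerivAt_id x).const_mul a).sin)

lemma deriv_cos_mul (a : ℝ) : deriv (fun y => cos (a*y)) = fun x => -sin (a*x) * a :=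
  funext fun x => (hasDerivAt_cos_mul a x).deriv

lemma deriv_sin_mul (a : ℝ) : deriv (fun y => sin (a*y)) = fun x => cos (a*x) * a :=
  funext fun x => (hasDerivAt_sin_mul a x).deriv

lemma sm_const_mul_sin (c a : ℝ) (m : ℤ) (ha : a = m*(2*π)) :
    Sm (fun x => c * sin (a*x)) := by
  refine ⟨contDiff_const.mul
    ((Real.contDiff_sin).comp (contDiff_const.mul contDiff_id)), fun x => ?_⟩
  simp only
  have hx : a*(x+1) = a*x + m*(2*π) := by rw [ha]; ring
  rw [hx, Real.sin_add_int_mul_two_pi]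

lemma ne_zero_of_int_mul {n : ℤ} (hn : n ≠ 0) : (n : ℝ) * (2*π) ≠ 0 := by
  have := Real.pi_ne_zero
  intro h
  rcases mul_eq_zero.mp h with h1 | h2
  · exact hn (by exact_mod_cast h1)
  · rcases mul_eq_zero.mp h2 with h3 | h4
    · norm_num at h3
    · exact this h4

lemma integral_cos_freq {c : ℝ} (n : ℤ) (h : c = n * (2*π)) (hn : n ≠ 0) :
    (∫ x in (0:ℝ)..1, cos (c*x)) = 0 := by
  have hc : c ≠ 0 := h ▸ ne_zero_of_int_mul hn
  rw [intervalIntegral.integral_comp_mul_left (fun y => cos y) hc]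
  have hs : sin c = 0 := by
    rw [h, show (n:ℝ)*(2*π) = 0 + n*(2*π) by ring, Real.sin_add_int_mul_two_pi]; simp
  simp [integral_cos, hs]

lemma integral_sin_freq {c : ℝ} (n : ℤ) (h : c = n * (2*π)) :
    (∫ x in (0:ℝ)..1, sin (c*x)) = 0 := by
  by_cases hn : n = 0
  · subst hn; norm_num at h; simp [h]
  · have hc : c ≠ 0 := h ▸ ne_zero_of_int_mul hn
    rw [intervalIntegral.integral_comp_mul_left (fun y => sin y) hc]
    have hcc : cos c = 1 := by
      rw [h, show (n:ℝ)*(2*π) = 0 + n*(2*π) by ring, Real.cos_add_int_mul_two_pi]; simp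
    simp [integral_sin, hcc]

lemma cos_mul_cos_eq (a b x : ℝ) :
    cos (a*x) * cos (b*x) = (cos ((a-b)*x) + cos ((a+b)*x))/2 := by
  rw [sub_mul, add_mul, Real.cos_sub, Real.cos_add]; ring

lemma sin_mul_sin_eq (a b x : ℝ) :
    sin (a*x) * sin (b*x) = (cos ((a-b)*x) - cos ((a+b)*x))/2 := by
  rw [sub_mul, add_mul, Real.cos_sub, Real.cos_add]; ring

lemma integral_cos_mul_cos {a b : ℝ} (m n : ℤ) (ha : a = m*(2*π)) (hb : b = n*(2*π))
    (h1 : m ≠ n) (h2 : m + n ≠ 0) :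
    (∫ x in (0:ℝ)..1, cos (a*x) * cos (b*x)) = 0 := by
  simp only [cos_mul_cos_eq]
  rw [intervalIntegral.integral_div,
    intervalIntegral.integral_add ((contC _).intervalIntegrable _ _)
      ((contC _).intervalIntegrable _ _),
    integral_cos_freq (m-n) (by push_cast [ha, hb]; ring) (sub_ne_zero.mpr h1),
    integral_cos_freq (m+n) (by push_cast [ha, hb]; ring) h2]
  norm_num

lemma integral_sin_mul_sin {a b : ℝ} (m n : ℤ) (ha : a = m*(2*π)) (hb : b = n*(2*π))
    (h1 : m ≠ n) (h2 : m + n ≠ 0) :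
    (∫ x in (0:ℝ)..1, sin (a*x) * sin (b*x)) = 0 := by
  simp only [sin_mul_sin_eq]
  rw [intervalIntegral.integral_div,
    intervalIntegral.integral_sub ((contC _).intervalIntegrable _ _)
      ((contC _).intervalIntegrable _ _),
    integral_cos_freq (m-n) (by push_cast [ha, hb]; ring) (sub_ne_zero.mpr h1),
    integral_cos_freq (m+n) (by push_cast [ha, hb]; ring) h2]
  norm_num

lemma integral_cos_sq' {a : ℝ} (n : ℤ) (ha : a = n*(2*π)) (hn : n ≠ 0) :
    (∫ x in (0:ℝ)..1, cos (a*x) * cos (a*x)) = 1/2 := by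
  simp only [cos_mul_cos_eq]
  rw [intervalIntegral.integral_div,
    intervalIntegral.integral_add ((contC _).intervalIntegrable _ _)
      ((contC _).intervalIntegrable _ _)]
  have h0 : (∫ x in (0:ℝ)..1, cos ((a-a)*x)) = 1 := by simp
  rw [h0, integral_cos_freq (n+n) (by push_cast [ha]; ring) (by omega)]
  norm_num

lemma integral_sin_sq' {a : ℝ} (n : ℤ) (ha : a = n*(2*π)) (hn : n ≠ 0) :
    (∫ x in (0:ℝ)..1, sin (a*x) * sin (a*x)) = 1/2 := by
  simp only [sin_mul_sin_eq]
  rw [intervalIntegral.integral_div,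
    intervalIntegral.integral_sub ((contC _).intervalIntegrable _ _)
      ((contC _).intervalIntegrable _ _)]
  have h0 : (∫ x in (0:ℝ)..1, cos ((a-a)*x)) = 1 := by simp
  rw [h0, integral_cos_freq (n+n) (by push_cast [ha]; ring) (by omega)]
  norm_num

lemma int_expand_sq (p q : ℝ → ℝ) (hp : Continuous p) (hq : Continuous q) (α : ℝ) :
    (∫ x in (0:ℝ)..1, (p x + α * q x) * (p x + α * q x))
      = (∫ x in (0:ℝ)..1, p x * p x) + (2 * α) * (∫ x in (0:ℝ)..1, p x * q x)
        + α^2 * (∫ x in (0:ℝ)..1, q x * q x) := by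
  have key : ∀ x:ℝ, (p x + α * q x) * (p x + α * q x)
      = p x * p x + ((2*α) * (p x * q x) + α^2 * (q x * q x)) := fun x => by ring
  simp only [key]
  rw [intervalIntegral.integral_add (f := fun x => p x * p x)
      (g := fun x => (2*α) * (p x * q x) + α^2 * (q x * q x)) ((hp.mul hp).intervalIntegrable _ _)
      (((continuous_const.mul (hp.mul hq)).add
        (continuous_const.mul (hq.mul hq))).intervalIntegrable _ _),
    intervalIntegral.integral_add (f := fun x => (2*α) * (p x * q x))
      (g := fun x => α^2 * (q x * q x)) ((continuous_const.mul (hp.mul hq)).intervalIntegrable _ _)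
      ((continuous_const.mul (hq.mul hq)).intervalIntegrable _ _),
    intervalIntegral.integral_const_mul, intervalIntegral.integral_const_mul]
  ring

lemma int_expand_lin (p q r : ℝ → ℝ) (hp : Continuous p) (hq : Continuous q)
    (hr : Continuous r) (α : ℝ) :
    (∫ x in (0:ℝ)..1, (p x + α * q x) * r x)
      = (∫ x in (0:ℝ)..1, p x * r x) + α * (∫ x in (0:ℝ)..1, q x * r x) := by
  have key : ∀ x:ℝ, (p x + α * q x) * r x
      = p x * r x + α * (q x * r x) := fun x => by ring
  simp only [key]
  rw [intervalIntegral.integral_add (f := fun x => p x * r x)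
      (g := fun x => α * (q x * r x)) ((hp.mul hr).intervalIntegrable _ _)
      ((continuous_const.mul (hq.mul hr)).intervalIntegrable _ _),
    intervalIntegral.integral_const_mul]

lemma deriv_add_smul (A Rh : ℝ → ℝ) (hA : Sm A) (hRh : Sm Rh) (α : ℝ) :
    deriv (fun x => A x + α * Rh x) = fun x => deriv A x + α * deriv Rh x :=
  funext fun x => (((hA.diff x).hasDerivAt).add
    (((hRh.diff x).hasDerivAt).const_mul α)).deriv

lemma innerA_quad (A Rh : ℝ → ℝ) (hA : Sm A) (hRh : Sm Rh) (w2 : ℝ → ℝ) (α : ℝ) :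
    innerA (fun x => A x + α * Rh x) w2 0 (fun x => A x + α * Rh x) w2 0
      = ((∫ x in (0:ℝ)..1, A x * A x) + (∫ x in (0:ℝ)..1, deriv A x * deriv A x)
          + ∫ x in (0:ℝ)..1, w2 x * w2 x)
        + (2 * ((∫ x in (0:ℝ)..1, A x * Rh x)
            + (∫ x in (0:ℝ)..1, deriv A x * deriv Rh x))) * α
        + ((∫ x in (0:ℝ)..1, Rh x * Rh x)
            + (∫ x in (0:ℝ)..1, deriv Rh x * deriv Rh x)) * α^2 := by
  unfold innerA
  rw [deriv_add_smul A Rh hA hRh α]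
  rw [int_expand_sq A Rh hA.cont hRh.cont α,
    int_expand_sq (deriv A) (deriv Rh) hA.derivSP.cont hRh.derivSP.cont α]
  have hzero : (∫ x in (0:ℝ)..1, ((A x + α * Rh x) * 0 + 0 * (A x + α * Rh x))) = 0 := by
    simp
  rw [hzero]
  ring

lemma innerA_lin (B Th y1 : ℝ → ℝ) (hB : Sm B) (hTh : Sm Th) (hy1 : Sm y1)
    (z2 y2 : ℝ → ℝ) (α : ℝ) :
    innerA (fun x => B x + α * Th x) z2 0 y1 y2 0
      = ((∫ x in (0:ℝ)..1, B x * y1 x) + (∫ x in (0:ℝ)..1, deriv B x * deriv y1 x)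
          + ∫ x in (0:ℝ)..1, z2 x * y2 x)
        + ((∫ x in (0:ℝ)..1, Th x * y1 x)
            + (∫ x in (0:ℝ)..1, deriv Th x * deriv y1 x)) * α := by
  unfold innerA
  rw [deriv_add_smul B Th hB hTh α]
  rw [int_expand_lin B Th y1 hB.cont hTh.cont hy1.cont α,
    int_expand_lin (deriv B) (deriv Th) (deriv y1) hB.derivSP.cont hTh.derivSP.cont
      hy1.derivSP.cont α]
  have hzero : (∫ x in (0:ℝ)..1, ((B x + α * Th x) * 0 + 0 * y1 x)) = 0 := by simp
  rw [hzero]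
  ring

/-- Uniqueness for the Helmholtz-type ODE with sine right-hand side. -/
lemma ode_unique {F : ℝ → ℝ} (hF : Sm F) {a b c : ℝ} (m : ℤ) (ha : a = m*(2*π))
    (hbc : c * (1 + a*a) = b)
    (hode : ∀ x, F x - deriv (deriv F) x = b * sin (a*x)) :
    ∀ x, F x = c * sin (a*x) := by
  have hsin : Sm (fun x => c * sin (a*x)) := sm_const_mul_sin c a m ha
  have hsm : Sm (fun x => F x - c * sin (a*x)) := hF.sub hsin
  have hd1 : deriv (fun x => F x - c * sin (a*x))
      = fun x => deriv F x - c * (cos (a*x) * a) :=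
    funext fun x => ((hF.diff x).hasDerivAt.sub
      ((hasDerivAt_sin_mul a x).const_mul c)).deriv
  have hd2 : deriv (deriv (fun x => F x - c * sin (a*x)))
      = fun x => deriv (deriv F) x - c * (-sin (a*x) * a * a) := by
    rw [hd1]
    exact funext fun x => ((hF.derivSP.diff x).hasDerivAt.sub
      (((hasDerivAt_cos_mul a x).mul_const a).const_mul c)).deriv
  have hz := hsm.eq_zero (fun x => by
    simp only [hd2]
    have h1 := hode x
    linear_combination h1 - sin (a*x) * hbc)
  intro x
  have hx := hz x
  linarith

end Aux

/-- The normalized sectional curvature `K(U_α,V)` of the 2CH system with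
vorticity in the cosine directions is bounded away from zero as `α → ∞`. -/
theorem stmt15 (k₁ k₂ l₁ l₂ : ℝ)
    (hk₁ : ∃ n : ℕ+, k₁ = 2 * π * n) (hk₂ : ∃ n : ℕ+, k₂ = 2 * π * n)
    (hl₁ : ∃ n : ℕ+, l₁ = 2 * π * n) (hl₂ : ∃ n : ℕ+, l₂ = 2 * π * n)
    (hkl₁ : k₁ ≠ l₁) (hkl₂ : k₂ ≠ l₂)
    (u₁ u₂ v₁ v₂ : ℝ → ℝ)
    (hu₁ : u₁ = fun x => cos (k₁ * x)) (hu₂ : u₂ = fun x => cos (k₂ * x))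
    (hv₁ : v₁ = fun x => cos (l₁ * x)) (hv₂ : v₂ = fun x => cos (l₂ * x))
    (Puv Puu Pvv Qvv : ℝ → ℝ) (Quv Quu : ℝ → ℝ → ℝ)
    (hPuv : SmoothPer Puv) (hPuu : SmoothPer Puu) (hPvv : SmoothPer Pvv)
    (hQvv : SmoothPer Qvv)
    (hQuv : ∀ α : ℝ, SmoothPer (Quv α)) (hQuu : ∀ α : ℝ, SmoothPer (Quu α))
    (hPuvEq : IsP u₁ u₂ v₁ v₂ Puv) (hPuuEq : IsP u₁ u₂ u₁ u₂ Puu)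
    (hPvvEq : IsP v₁ v₂ v₁ v₂ Pvv) (hQvvEq : IsQ v₁ 1 v₁ 1 Qvv)
    (hQuvEq : ∀ α : ℝ, IsQ u₁ α v₁ 1 (Quv α))
    (hQuuEq : ∀ α : ℝ, IsQ u₁ α u₁ α (Quu α))
    (S K : ℝ → ℝ)
    (hS : ∀ α : ℝ, S α
      = innerA
          (fun x => -Puv x + Quv α x / 2)
          (fun x => -(u₂ x * deriv v₁ x + deriv u₁ x * v₂ x) / 2) 0
          (fun x => -Puv x + Quv α x / 2)
          (fun x => -(u₂ x * deriv v₁ x + deriv u₁ x * v₂ x) / 2) 0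
        - innerA
          (fun x => -Puu x + Quu α x / 2)
          (fun x => -(u₂ x * deriv u₁ x + deriv u₁ x * u₂ x) / 2) 0
          (fun x => -Pvv x + Qvv x / 2)
          (fun x => -(v₂ x * deriv v₁ x + deriv v₁ x * v₂ x) / 2) 0)
    (hK : ∀ α : ℝ, K α
      = S α / (innerA u₁ u₂ α u₁ u₂ α * innerA v₁ v₂ 1 v₁ v₂ 1
          - (innerA u₁ u₂ α v₁ v₂ 1) ^ 2)) :
    ∃ c : ℝ, 0 < c ∧ ∃ α₀ : ℝ, ∀ α : ℝ, α₀ ≤ α → c ≤ K α := by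
  classical
  obtain ⟨n1, hk1⟩ := hk₁
  obtain ⟨n2, hk2⟩ := hk₂
  obtain ⟨m1, hl1⟩ := hl₁
  obtain ⟨m2, hl2⟩ := hl₂
  subst hu₁ hu₂ hv₁ hv₂
  simp only [IsQ] at hQuvEq hQuuEq
  -- casts
  have hk1' : k₁ = ((n1:ℤ):ℝ) * (2*π) := by rw [hk1]; push_cast; ring
  have hk2' : k₂ = ((n2:ℤ):ℝ) * (2*π) := by rw [hk2]; push_cast; ring
  have hl1' : l₁ = ((m1:ℤ):ℝ) * (2*π) := by rw [hl1]; push_cast; ring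
  have hl2' : l₂ = ((m2:ℤ):ℝ) * (2*π) := by rw [hl2]; push_cast; ring
  have hn1z : ((n1:ℤ)) ≠ 0 := by
    have h : (0:ℤ) < n1 := by exact_mod_cast n1.pos
    exact h.ne'
  have hn2z : ((n2:ℤ)) ≠ 0 := by
    have h : (0:ℤ) < n2 := by exact_mod_cast n2.pos
    exact h.ne'
  have hm1z : ((m1:ℤ)) ≠ 0 := by
    have h : (0:ℤ) < m1 := by exact_mod_cast m1.pos
    exact h.ne'
  have hm2z : ((m2:ℤ)) ≠ 0 := by
    have h : (0:ℤ) < m2 := by exact_mod_cast m2.pos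
    exact h.ne'
  have hne1 : ((n1:ℤ)) ≠ ((m1:ℤ)) := by
    intro h
    apply hkl₁
    have : ((n1:ℕ):ℝ) = ((m1:ℕ):ℝ) := by exact_mod_cast h
    rw [hk1, hl1, this]
  have hne2 : ((n2:ℤ)) ≠ ((m2:ℤ)) := by
    intro h
    apply hkl₂
    have : ((n2:ℕ):ℝ) = ((m2:ℕ):ℝ) := by exact_mod_cast h
    rw [hk2, hl2, this]
  have hsum1 : ((n1:ℤ)) + ((m1:ℤ)) ≠ 0 := by
    have a1 : (0:ℤ) < n1 := by exact_mod_cast n1.pos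
    have a2 : (0:ℤ) < m1 := by exact_mod_cast m1.pos
    omega
  have hsum2 : ((n2:ℤ)) + ((m2:ℤ)) ≠ 0 := by
    have a1 : (0:ℤ) < n2 := by exact_mod_cast n2.pos
    have a2 : (0:ℤ) < m2 := by exact_mod_cast m2.pos
    omega
  have hl₁pos : 0 < l₁ := by
    have hm : (0:ℝ) < (m1:ℕ) := by exact_mod_cast m1.pos
    rw [hl1]
    have := Real.pi_pos
    positivity
  have hk₁pos : 0 < k₁ := by
    have hm : (0:ℝ) < (n1:ℕ) := by exact_mod_cast n1.pos
    rw [hk1]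
    have := Real.pi_pos
    positivity
  have h1l : (0:ℝ) < 1 + l₁*l₁ := by positivity
  have h1k : (0:ℝ) < 1 + k₁*k₁ := by positivity
  -- decomposition of Quv
  have hQuvdec : ∀ (β x : ℝ),
      Quv β x = Quv 0 x + (β * -(l₁/(1+l₁*l₁))) * sin (l₁*x) := by
    intro β
    have hF : Sm (fun x => Quv β x - Quv 0 x) := (hQuv β).sm.sub (hQuv 0).sm
    have hdF : deriv (fun x => Quv β x - Quv 0 x)
        = fun x => deriv (Quv β) x - deriv (Quv 0) x :=
      funext fun y => (((hQuv β).sm.diff y).hasDerivAt.sub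
        ((hQuv 0).sm.diff y).hasDerivAt).deriv
    have hddF : deriv (deriv (fun x => Quv β x - Quv 0 x))
        = fun x => deriv (deriv (Quv β)) x - deriv (deriv (Quv 0)) x := by
      rw [hdF]
      exact funext fun y => (((hQuv β).sm.derivSP.diff y).hasDerivAt.sub
        ((hQuv 0).sm.derivSP.diff y).hasDerivAt).deriv
    have hodeF : ∀ x, (fun x => Quv β x - Quv 0 x) x
        - deriv (deriv (fun x => Quv β x - Quv 0 x)) x = (β * -l₁) * sin (l₁*x) := by
      intro x
      simp only [hddF]
      have h1 : Quv β x - deriv (deriv (Quv β)) x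
          = β * (-sin (l₁*x) * l₁) + -sin (k₁*x) * k₁ * 1 :=
        (hQuvEq β x).trans ((((hasDerivAt_cos_mul l₁ x).const_mul β).add
          ((hasDerivAt_cos_mul k₁ x).mul_const 1)).deriv)
      have h2 : Quv 0 x - deriv (deriv (Quv 0)) x
          = 0 * (-sin (l₁*x) * l₁) + -sin (k₁*x) * k₁ * 1 :=
        (hQuvEq 0 x).trans ((((hasDerivAt_cos_mul l₁ x).const_mul 0).add
          ((hasDerivAt_cos_mul k₁ x).mul_const 1)).deriv)
      linear_combination h1 - h2
    have hbc : (β * -(l₁/(1+l₁*l₁))) * (1 + l₁*l₁) = β * -l₁ := by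
      field_simp
    have hdec := ode_unique hF (↑m1) hl1' hbc hodeF
    intro x
    have hx := hdec x
    linarith
  -- decomposition of Quu
  have hQuudec : ∀ (β x : ℝ),
      Quu β x = (β * -(2*k₁/(1+k₁*k₁))) * sin (k₁*x) := by
    intro β
    have hodeF : ∀ x, Quu β x - deriv (deriv (Quu β)) x
        = (β * (-2*k₁)) * sin (k₁*x) := by
      intro x
      have h1 : Quu β x - deriv (deriv (Quu β)) x
          = β * (-sin (k₁*x) * k₁) + -sin (k₁*x) * k₁ * β :=
        (hQuuEq β x).trans ((((hasDerivAt_cos_mul k₁ x).const_mul β).add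
          ((hasDerivAt_cos_mul k₁ x).mul_const β)).deriv)
      linear_combination h1
    have hbc : (β * -(2*k₁/(1+k₁*k₁))) * (1 + k₁*k₁) = β * (-2*k₁) := by
      field_simp
    exact ode_unique (hQuu β).sm (↑n1) hk1' hbc hodeF
  -- named pieces
  set A : ℝ → ℝ := fun x => -Puv x + Quv 0 x / 2 with hAdef
  set Rh : ℝ → ℝ := fun x => -(l₁/(1+l₁*l₁))/2 * sin (l₁*x) with hRhdef
  set B : ℝ → ℝ := fun x => -Puu x with hBdef
  set Th : ℝ → ℝ := fun x => -(2*k₁/(1+k₁*k₁))/2 * sin (k₁*x) with hThdef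
  have hA : Sm A := by
    rw [hAdef]
    exact ⟨(hPuv.sm.1.neg).add ((hQuv 0).sm.1.div_const 2),
      fun x => by simp only; rw [hPuv.2, (hQuv 0).2]⟩
  have hRh : Sm Rh := by rw [hRhdef]; exact sm_const_mul_sin _ _ (↑m1) hl1'
  have hB : Sm B := by
    rw [hBdef]; exact ⟨hPuu.sm.1.neg, fun x => by simp only; rw [hPuu.2]⟩
  have hTh : Sm Th := by rw [hThdef]; exact sm_const_mul_sin _ _ (↑n1) hk1'
  have hY1 : Sm (fun x => -Pvv x + Qvv x / 2) :=
    ⟨(hPvv.sm.1.neg).add (hQvv.sm.1.div_const 2),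
      fun x => by simp only; rw [hPvv.2, hQvv.2]⟩
  have hwfun : ∀ β : ℝ, (fun x => -Puv x + Quv β x / 2) = fun x => A x + β * Rh x := by
    intro β
    funext x
    rw [hQuvdec β x, hAdef, hRhdef]
    simp only
    ring
  have hzfun : ∀ β : ℝ, (fun x => -Puu x + Quu β x / 2) = fun x => B x + β * Th x := by
    intro β
    funext x
    rw [hQuudec β x, hBdef, hThdef]
    simp only
    ring
  -- the quadratic coefficient
  set C2 : ℝ := (∫ x in (0:ℝ)..1, Rh x * Rh x)
      + ∫ x in (0:ℝ)..1, deriv Rh x * deriv Rh x with hC2def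
  have hdRh : deriv Rh = fun x => -(l₁/(1+l₁*l₁))/2 * (cos (l₁*x) * l₁) := by
    rw [hRhdef]
    exact funext fun x => ((hasDerivAt_sin_mul l₁ x).const_mul _).deriv
  have hIRR : (∫ x in (0:ℝ)..1, Rh x * Rh x) = (l₁/(1+l₁*l₁)/2)^2 * (1/2) := by
    simp only [hRhdef]
    rw [show (∫ x in (0:ℝ)..1, -(l₁/(1+l₁*l₁))/2 * sin (l₁*x)
          * (-(l₁/(1+l₁*l₁))/2 * sin (l₁*x)))
        = (l₁/(1+l₁*l₁)/2)^2 * ∫ x in (0:ℝ)..1, sin (l₁*x) * sin (l₁*x) from by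
      rw [← intervalIntegral.integral_const_mul]; congr 1; funext x; ring]
    rw [integral_sin_sq' (↑m1) hl1' hm1z]
  have hIdRdR : (∫ x in (0:ℝ)..1, deriv Rh x * deriv Rh x)
      = (l₁/(1+l₁*l₁)/2 * l₁)^2 * (1/2) := by
    simp only [hdRh]
    rw [show (∫ x in (0:ℝ)..1, -(l₁/(1+l₁*l₁))/2 * (cos (l₁*x) * l₁)
          * (-(l₁/(1+l₁*l₁))/2 * (cos (l₁*x) * l₁)))
        = (l₁/(1+l₁*l₁)/2 * l₁)^2 * ∫ x in (0:ℝ)..1, cos (l₁*x) * cos (l₁*x) from by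
      rw [← intervalIntegral.integral_const_mul]; congr 1; funext x; ring]
    rw [integral_cos_sq' (↑m1) hl1' hm1z]
  have hC2pos : 0 < C2 := by
    rw [hC2def, hIRR, hIdRdR]
    have h := hl₁pos
    positivity
  -- the key quadratic formula
  have key : ∀ α : ℝ, S α = S 0 + (S 1 - S 0 - C2) * α + C2 * α^2 := by
    intro α
    rw [hS α, hS 0, hS 1]
    simp only [hwfun, hzfun,
      innerA_quad A Rh hA hRh, innerA_lin B Th (fun x => -Pvv x + Qvv x / 2) hB hTh hY1]
    rw [← hC2def]
    ring
  -- denominator evaluations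
  have hUU : ∀ α : ℝ, innerA (fun x => cos (k₁*x)) (fun x => cos (k₂*x)) α
      (fun x => cos (k₁*x)) (fun x => cos (k₂*x)) α = (2 + k₁^2 + α^2)/2 := by
    intro α
    simp only [innerA, deriv_cos_mul]
    rw [integral_cos_sq' (↑n1) hk1' hn1z, integral_cos_sq' (↑n2) hk2' hn2z]
    rw [show (∫ x in (0:ℝ)..1, -sin (k₁*x) * k₁ * (-sin (k₁*x) * k₁))
        = k₁^2 * ∫ x in (0:ℝ)..1, sin (k₁*x) * sin (k₁*x) from by
      rw [← intervalIntegral.integral_const_mul]; congr 1; funext x; ring]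
    rw [integral_sin_sq' (↑n1) hk1' hn1z]
    rw [show (∫ x in (0:ℝ)..1, (cos (k₁*x) * α + α * cos (k₁*x)))
        = (2*α) * ∫ x in (0:ℝ)..1, cos (k₁*x) from by
      rw [← intervalIntegral.integral_const_mul]; congr 1; funext x; ring]
    rw [integral_cos_freq (↑n1) hk1' hn1z]
    ring
  have hVV : innerA (fun x => cos (l₁*x)) (fun x => cos (l₂*x)) 1
      (fun x => cos (l₁*x)) (fun x => cos (l₂*x)) 1 = (3 + l₁^2)/2 := by
    simp only [innerA, deriv_cos_mul]
    rw [integral_cos_sq' (↑m1) hl1' hm1z, integral_cos_sq' (↑m2) hl2' hm2z]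
    rw [show (∫ x in (0:ℝ)..1, -sin (l₁*x) * l₁ * (-sin (l₁*x) * l₁))
        = l₁^2 * ∫ x in (0:ℝ)..1, sin (l₁*x) * sin (l₁*x) from by
      rw [← intervalIntegral.integral_const_mul]; congr 1; funext x; ring]
    rw [integral_sin_sq' (↑m1) hl1' hm1z]
    rw [show (∫ x in (0:ℝ)..1, (cos (l₁*x) * 1 + 1 * cos (l₁*x)))
        = (2:ℝ) * ∫ x in (0:ℝ)..1, cos (l₁*x) from by
      rw [← intervalIntegral.integral_const_mul]; congr 1; funext x; ring]
    rw [integral_cos_freq (↑m1) hl1' hm1z]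
    ring
  have hUV : ∀ α : ℝ, innerA (fun x => cos (k₁*x)) (fun x => cos (k₂*x)) α
      (fun x => cos (l₁*x)) (fun x => cos (l₂*x)) 1 = α/2 := by
    intro α
    simp only [innerA, deriv_cos_mul]
    rw [integral_cos_mul_cos (↑n1) (↑m1) hk1' hl1' hne1 hsum1,
      integral_cos_mul_cos (↑n2) (↑m2) hk2' hl2' hne2 hsum2]
    rw [show (∫ x in (0:ℝ)..1, -sin (k₁*x) * k₁ * (-sin (l₁*x) * l₁))
        = (k₁*l₁) * ∫ x in (0:ℝ)..1, sin (k₁*x) * sin (l₁*x) from by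
      rw [← intervalIntegral.integral_const_mul]; congr 1; funext x; ring]
    rw [integral_sin_mul_sin (↑n1) (↑m1) hk1' hl1' hne1 hsum1]
    rw [show (∫ x in (0:ℝ)..1, (cos (k₁*x) * 1 + α * cos (l₁*x)))
        = (∫ x in (0:ℝ)..1, cos (k₁*x) * 1) + ∫ x in (0:ℝ)..1, α * cos (l₁*x) from
      intervalIntegral.integral_add (((contC k₁).mul continuous_const).intervalIntegrable _ _)
        ((continuous_const.mul (contC l₁)).intervalIntegrable _ _)]
    rw [show (∫ x in (0:ℝ)..1, cos (k₁*x) * 1) = ∫ x in (0:ℝ)..1, cos (k₁*x) from by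
      congr 1; funext x; ring]
    rw [intervalIntegral.integral_const_mul, integral_cos_freq (↑n1) hk1' hn1z,
      integral_cos_freq (↑m1) hl1' hm1z]
    ring
  set E0 : ℝ := (2 + k₁^2) * (3 + l₁^2) / 4 with hE0def
  set E2 : ℝ := (2 + l₁^2) / 4 with hE2def
  have hE0pos : 0 < E0 := by rw [hE0def]; positivity
  have hE2pos : 0 < E2 := by rw [hE2def]; positivity
  have hDen : ∀ α : ℝ,
      innerA (fun x => cos (k₁*x)) (fun x => cos (k₂*x)) α
          (fun x => cos (k₁*x)) (fun x => cos (k₂*x)) α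
        * innerA (fun x => cos (l₁*x)) (fun x => cos (l₂*x)) 1
          (fun x => cos (l₁*x)) (fun x => cos (l₂*x)) 1
        - (innerA (fun x => cos (k₁*x)) (fun x => cos (k₂*x)) α
            (fun x => cos (l₁*x)) (fun x => cos (l₂*x)) 1)^2
      = E0 + E2 * α^2 := by
    intro α
    rw [hUU α, hVV, hUV α, hE0def, hE2def]
    ring
  -- the limit
  have h1 : Tendsto (fun α:ℝ => S 0 * (α⁻¹)^2 + (S 1 - S 0 - C2) * α⁻¹ + C2)
      atTop (𝓝 C2) := by
    have := (((tendsto_inv_atTop_zero (𝕜 := ℝ)).pow 2).const_mul (S 0)).add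
      (((tendsto_inv_atTop_zero (𝕜 := ℝ)).const_mul (S 1 - S 0 - C2)).add
        (tendsto_const_nhds (α := ℝ) (x := C2)))
    simpa using this.congr (fun α => by ring)
  have h2 : Tendsto (fun α:ℝ => E0 * (α⁻¹)^2 + E2) atTop (𝓝 E2) := by
    have := (((tendsto_inv_atTop_zero (𝕜 := ℝ)).pow 2).const_mul E0).add
      (tendsto_const_nhds (α := ℝ) (x := E2))
    simpa using this
  have hG : Tendsto (fun α:ℝ => (S 0 * (α⁻¹)^2 + (S 1 - S 0 - C2) * α⁻¹ + C2)
      / (E0 * (α⁻¹)^2 + E2)) atTop (𝓝 (C2 / E2)) := h1.div h2 hE2pos.ne'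
  have heq : (fun α:ℝ => (S 0 * (α⁻¹)^2 + (S 1 - S 0 - C2) * α⁻¹ + C2)
      / (E0 * (α⁻¹)^2 + E2)) =ᶠ[atTop] K := by
    filter_upwards [eventually_ge_atTop (1:ℝ)] with α hα
    have hα0 : (0:ℝ) < α := lt_of_lt_of_le one_pos hα
    have hαne : α ≠ 0 := hα0.ne'
    rw [hK α, key α, hDen α]
    rw [div_eq_div_iff (by positivity) (by positivity)]
    field_simp
  have hT : Tendsto K atTop (𝓝 (C2 / E2)) := hG.congr' heq
  have hLpos : 0 < C2 / E2 := div_pos hC2pos hE2pos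
  have hev : ∀ᶠ α in atTop, C2 / E2 / 2 < K α :=
    hT.eventually_const_lt (by linarith)
  obtain ⟨α₀, hα₀⟩ := eventually_atTop.mp hev
  exact ⟨C2 / E2 / 2, by positivity, α₀, fun α hα => (hα₀ α hα).le⟩
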